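/- Let (A,C)_ψ be an entwining structure. Set W(a⊗b) = s·ba⊗1 + r·1⊗ba − s·b⊗a on A⊗A, Z(c⊗d) = t·ε(c)Δ(d) + p·ε(d)Δ(c) − p·d⊗c on C⊗C, and X = ψ∘τ: A⊗C → A⊗C. Then [W,X,X] = 0, i.e., W₁₂∘X₁₃∘X₂₃ = X₂₃∘X₁₃∘W₁₂ on A⊗A⊗C. -/
import Mathlib


open TensorProduct LinearMap


/-- `ψ : C ⊗ A → A ⊗ C` is an entwining map, i.e. `(A, C)_ψ` is an entwining structure:
(1) `ψ∘(id_C⊗μ) = (μ⊗id_C)∘(id_A⊗ψ)∘(ψ⊗id_A)`;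
(2) `(id_A⊗Δ)∘ψ = (ψ⊗id_C)∘(id_C⊗ψ)∘(Δ⊗id_A)`;
(3) `ψ(c⊗1) = 1⊗c`; (4) `(id_A⊗ε)∘ψ = ε⊗id_A`. -/
def IsEntwining (k : Type*) {A C : Type*} [Field k] [Ring A] [Algebra k A]
    [AddCommGroup C] [Module k C] [Coalgebra k C]
    (ψ : C ⊗[k] A →ₗ[k] A ⊗[k] C) : Prop :=
  (∀ (c : C) (a b : A),
    ψ (c ⊗ₜ[k] (a * b)) =
      (LinearMap.mul' k A).rTensor C
        ((TensorProduct.assoc k A A C).symm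
          (ψ.lTensor A ((TensorProduct.assoc k A C A)
            (ψ.rTensor A ((c ⊗ₜ[k] a) ⊗ₜ[k] b)))))) ∧
  (∀ (c : C) (a : A),
    (Coalgebra.comul (R := k) (A := C)).lTensor A (ψ (c ⊗ₜ[k] a)) =
      (TensorProduct.assoc k A C C)
        (ψ.rTensor C ((TensorProduct.assoc k C A C).symm
          (ψ.lTensor C ((TensorProduct.assoc k C C A)
            ((Coalgebra.comul (R := k) (A := C)).rTensor A (c ⊗ₜ[k] a))))))) ∧
  (∀ c : C, ψ (c ⊗ₜ[k] (1 : A)) = (1 : A) ⊗ₜ[k] c) ∧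
  (∀ (c : C) (a : A),
    (Coalgebra.counit (R := k) (A := C)).lTensor A (ψ (c ⊗ₜ[k] a)) =
      a ⊗ₜ[k] Coalgebra.counit (R := k) c)

/-- For an entwining structure `(A,C)_ψ`, with
`W(a⊗b) = s·ba⊗1 + r·1⊗ba − s·b⊗a`, `Z(c⊗d) = t·ε(c)Δ(d) + p·ε(d)Δ(c) − p·d⊗c` and
`X = ψ∘τ`, one has `[W,X,X] = 0`, i.e. `W₁₂∘X₁₃∘X₂₃ = X₂₃∘X₁₃∘W₁₂` on `A⊗A⊗C`. -/
theorem stmt5 (k A C : Type*) [Field k] [Ring A] [Algebra k A]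
    [AddCommGroup C] [Module k C] [Coalgebra k C]
    (r s t p : k)
    (ψ : C ⊗[k] A →ₗ[k] A ⊗[k] C) (hψ : IsEntwining k ψ)
    (W : A ⊗[k] A →ₗ[k] A ⊗[k] A)
    (hW : ∀ a b : A, W (a ⊗ₜ[k] b) =
      s • ((b * a) ⊗ₜ[k] (1 : A)) + r • ((1 : A) ⊗ₜ[k] (b * a)) - s • (b ⊗ₜ[k] a))
    (Z : C ⊗[k] C →ₗ[k] C ⊗[k] C)
    (hZ : ∀ c d : C, Z (c ⊗ₜ[k] d) =
      (t * Coalgebra.counit (R := k) c) • Coalgebra.comul (R := k) d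
      + (p * Coalgebra.counit (R := k) d) • Coalgebra.comul (R := k) c
      - p • (d ⊗ₜ[k] c))
    (X : A ⊗[k] C →ₗ[k] A ⊗[k] C)
    (hX : X = ψ ∘ₗ (TensorProduct.comm k A C).toLinearMap)
    (W12 X13 : A ⊗[k] (A ⊗[k] C) →ₗ[k] A ⊗[k] (A ⊗[k] C))
    -- `W12` acts as `W` on the first two tensor factors:
    (hW12 : ∀ (a b : A) (c : C), W12 (a ⊗ₜ[k] (b ⊗ₜ[k] c)) =
      ((TensorProduct.mk k A C).flip c).lTensor A (W (a ⊗ₜ[k] b)))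
    -- `X13` acts as `X` on the first and third tensor factors:
    (hX13 : ∀ (a b : A) (c : C), X13 (a ⊗ₜ[k] (b ⊗ₜ[k] c)) =
      (TensorProduct.mk k A C b).lTensor A (X (a ⊗ₜ[k] c))) :
    W12 ∘ₗ X13 ∘ₗ X.lTensor A = X.lTensor A ∘ₗ X13 ∘ₗ W12 := by
  obtain ⟨h1, h2, h3, h4⟩ := hψ
  have hXapp : ∀ (a : A) (c : C), X (a ⊗ₜ[k] c) = ψ (c ⊗ₜ[k] a) := by
    intro a c; rw [hX]; rfl
  -- inner lemma
  have inner : ∀ (b' : A) (z : A ⊗[k] C),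
      W12 ((TensorProduct.mk k A C b').lTensor A z)
        = s • (TensorProduct.mk k A C (1:A)).lTensor A
            ((LinearMap.mul' k A).rTensor C
              ((TensorProduct.assoc k A A C).symm (b' ⊗ₜ[k] z)))
        + r • (TensorProduct.mk k A (A ⊗[k] C) (1:A))
            ((LinearMap.mul' k A).rTensor C
              ((TensorProduct.assoc k A A C).symm (b' ⊗ₜ[k] z)))
        - s • (b' ⊗ₜ[k] z) := by
    intro b' z
    induction z using TensorProduct.induction_on with
    | zero => simp
    | tmul u v =>
        simp only [lTensor_tmul, TensorProduct.mk_apply, hW12, hW, map_add, map_sub,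
          map_smul, LinearMap.flip_apply, TensorProduct.assoc_symm_tmul, rTensor_tmul,
          LinearMap.mul'_apply]
    | add z1 z2 hz1 hz2 =>
        simp only [map_add, TensorProduct.tmul_add, smul_add, hz1, hz2]
        abel
  -- key lemma for the LHS
  have key : ∀ (a : A) (x : A ⊗[k] C),
      W12 (X13 (a ⊗ₜ[k] x))
        = s • (TensorProduct.mk k A C (1:A)).lTensor A
            ((LinearMap.mul' k A).rTensor C
              ((TensorProduct.assoc k A A C).symm
                (ψ.lTensor A ((TensorProduct.assoc k A C A) (x ⊗ₜ[k] a)))))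
        + r • (TensorProduct.mk k A (A ⊗[k] C) (1:A))
            ((LinearMap.mul' k A).rTensor C
              ((TensorProduct.assoc k A A C).symm
                (ψ.lTensor A ((TensorProduct.assoc k A C A) (x ⊗ₜ[k] a)))))
        - s • (ψ ∘ₗ (TensorProduct.mk k C A).flip a).lTensor A x := by
    intro a x
    induction x using TensorProduct.induction_on with
    | zero => simp
    | tmul b' c' =>
        rw [hX13, hXapp, inner b' (ψ (c' ⊗ₜ[k] a))]
        simp only [TensorProduct.assoc_tmul, lTensor_tmul, LinearMap.comp_apply,
          LinearMap.flip_apply, TensorProduct.mk_apply]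
    | add x1 x2 hx1 hx2 =>
        simp only [TensorProduct.tmul_add, map_add, TensorProduct.add_tmul, smul_add,
          hx1, hx2]
        abel
  have oX1 : X ∘ₗ TensorProduct.mk k A C 1 = TensorProduct.mk k A C 1 := by
    ext v; simp [hXapp, h3]
  have oXa : ∀ a : A, X ∘ₗ TensorProduct.mk k A C a
      = ψ ∘ₗ (TensorProduct.mk k C A).flip a := by
    intro a; ext v; simp [hXapp]
  apply TensorProduct.ext'
  intro a x
  induction x using TensorProduct.induction_on with
  | zero => simp
  | add y z hy hz =>
      simp only [TensorProduct.tmul_add, map_add, LinearMap.comp_apply] at hy hz ⊢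
      rw [hy, hz]
  | tmul b c =>
      simp only [LinearMap.comp_apply, lTensor_tmul]
      rw [hXapp b c, key a (ψ (c ⊗ₜ[k] b))]
      -- compute the RHS
      rw [hW12, hW]
      simp only [map_add, map_sub, map_smul, lTensor_tmul, LinearMap.flip_apply,
        TensorProduct.mk_apply]
      rw [hX13, hX13, hX13, hXapp, hXapp, hXapp, h3 c]
      -- term 1
      have t1 : X.lTensor A ((TensorProduct.mk k A C (1:A)).lTensor A (ψ (c ⊗ₜ[k] (b * a))))
          = (TensorProduct.mk k A C (1:A)).lTensor A (ψ (c ⊗ₜ[k] (b * a))) := by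
        rw [← LinearMap.lTensor_comp_apply, oX1]
      -- term 3
      have t3 : X.lTensor A ((TensorProduct.mk k A C a).lTensor A (ψ (c ⊗ₜ[k] b)))
          = (ψ ∘ₗ (TensorProduct.mk k C A).flip a).lTensor A (ψ (c ⊗ₜ[k] b)) := by
        rw [← LinearMap.lTensor_comp_apply, oXa]
      rw [t1, t3]
      simp only [lTensor_tmul, TensorProduct.mk_apply, hXapp]
      -- identify ψ(c ⊗ (b*a)) with the composite via entwining condition (1)
      have hcomp : ψ (c ⊗ₜ[k] (b * a))
          = (LinearMap.mul' k A).rTensor C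
              ((TensorProduct.assoc k A A C).symm
                (ψ.lTensor A ((TensorProduct.assoc k A C A) (ψ (c ⊗ₜ[k] b) ⊗ₜ[k] a)))) := by
        have := h1 c b a
        rwa [rTensor_tmul] at this
      rw [hcomp]
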